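/- The chordal metric on ℝⁿ is Ptolemaic: for all x1, x2, x3, x4 ∈ ℝⁿ one has d̄(x1,x2)·d̄(x3,x4) ≤ d̄(x2,x4)·d̄(x1,x3) + d̄(x1,x4)·d̄(x2,x3). -/

import Mathlib

/-!
Ptolemy's inequality holds for the Euclidean distance, and it survives any rescaling
`d x y ↦ c * d x y / (w x * w y)` with `c ≥ 0` and a nonnegative weight `w`: both sides are sums of
products of two distances over complementary pairs of points, so every term carries the same factor
`c² / (w x₁ * w x₂ * w x₃ * w x₄)`. The chordal metric is the rescaling of `‖x - y‖` with `c = 2` and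
`w x = √(1 + ‖x‖²)`.
-/

/-- The chordal metric on `ℝⁿ`, arising from the unit Riemann sphere. -/
noncomputable def chordalDist {n : ℕ} (x y : EuclideanSpace ℝ (Fin n)) : ℝ :=
  2 * ‖x - y‖ / (Real.sqrt (1 + ‖x‖ ^ 2) * Real.sqrt (1 + ‖y‖ ^ 2))

def IsPtolemaic {α : Type*} (d : α → α → ℝ) : Prop :=
  ∀ x₁ x₂ x₃ x₄, d x₁ x₂ * d x₃ x₄ ≤ d x₂ x₄ * d x₁ x₃ + d x₁ x₄ * d x₂ x₃

theorem isPtolemaic_dist {V P : Type*} [NormedAddCommGroup V] [InnerProductSpace ℝ V]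
    [MetricSpace P] [NormedAddTorsor V P] : IsPtolemaic (dist : P → P → ℝ) := by
  intro x₁ x₂ x₃ x₄
  have h := EuclideanGeometry.mul_dist_le_mul_dist_add_mul_dist x₁ x₃ x₂ x₄
  rw [dist_comm x₃ x₂] at h
  linarith [mul_comm (dist x₁ x₃) (dist x₂ x₄), mul_comm (dist x₂ x₃) (dist x₁ x₄)]

namespace IsPtolemaic

variable {α : Type*} {d : α → α → ℝ}

theorem const_mul (hd : IsPtolemaic d) {c : ℝ} (hc : 0 ≤ c) :
    IsPtolemaic fun x y ↦ c * d x y := by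
  intro x₁ x₂ x₃ x₄
  have h := mul_le_mul_of_nonneg_left (hd x₁ x₂ x₃ x₄) (mul_nonneg hc hc)
  linarith

theorem div_mul_weight (hd : IsPtolemaic d) {w : α → ℝ} (hw : ∀ x, 0 ≤ w x) :
    IsPtolemaic fun x y ↦ d x y / (w x * w y) := by
  intro x₁ x₂ x₃ x₄
  have hW : 0 ≤ w x₁ * w x₂ * w x₃ * w x₄ :=
    mul_nonneg (mul_nonneg (mul_nonneg (hw _) (hw _)) (hw _)) (hw _)
  calc d x₁ x₂ / (w x₁ * w x₂) * (d x₃ x₄ / (w x₃ * w x₄))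
      = d x₁ x₂ * d x₃ x₄ / (w x₁ * w x₂ * w x₃ * w x₄) := by ring
    _ ≤ (d x₂ x₄ * d x₁ x₃ + d x₁ x₄ * d x₂ x₃) / (w x₁ * w x₂ * w x₃ * w x₄) :=
      div_le_div_of_nonneg_right (hd x₁ x₂ x₃ x₄) hW
    _ = d x₂ x₄ / (w x₂ * w x₄) * (d x₁ x₃ / (w x₁ * w x₃)) +
          d x₁ x₄ / (w x₁ * w x₄) * (d x₂ x₃ / (w x₂ * w x₃)) := by ring

end IsPtolemaic

/-- The chordal metric on `ℝⁿ` is Ptolemaic. -/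
theorem chordal_ptolemaic {n : ℕ} (x1 x2 x3 x4 : EuclideanSpace ℝ (Fin n)) :
    chordalDist x1 x2 * chordalDist x3 x4 ≤
      chordalDist x2 x4 * chordalDist x1 x3 + chordalDist x1 x4 * chordalDist x2 x3 := by
  have h : IsPtolemaic fun x y : EuclideanSpace ℝ (Fin n) ↦
      2 * dist x y / (Real.sqrt (1 + ‖x‖ ^ 2) * Real.sqrt (1 + ‖y‖ ^ 2)) :=
    (isPtolemaic_dist.const_mul zero_le_two).div_mul_weight fun _ ↦ Real.sqrt_nonneg _
  simpa only [chordalDist, dist_eq_norm] using h x1 x2 x3 x4
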